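/- arXiv:1902.02592 — 3 statements merged into one kernel-verified Lean document; each statement's English description precedes it below -/
import Mathlib

section
/- Let G be a group and k ≥ 1 an integer. If φ and ψ are automorphisms of the quotient G/Γ_{2k+1}G (where Γ_j denotes the lower central series) that both induce the identity on G/Γ_{k+1}G, then φ and ψ commute. -/
/-!
Indexing as in Mathlib, `γ n = Γ_{n+1}`, so `Q = G/Γ_{2k+1}G` has `γ (2k) Q = 1`. Write
`φ q = q a` and `ψ q = q b` with `a, b ∈ γ k Q`. From `⁅γ m, γ n⁆ ≤ γ (m + n + 1)` (three subgroups
lemma) one gets by induction on `j` that `φ` moves elements of `γ j` by elements of `γ (j + k)`;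
for `j = k` this says that `φ` and `ψ` fix `γ k Q` pointwise, and `⁅a, b⁆ ∈ γ (2k + 1) = 1`. Hence
`φ (ψ q) = φ (q b) = q a b = q b a = ψ (φ q)`.
-/
open QuotientGroup
open scoped commutatorElement

theorem commutatorElement_mul_mul_of_commute {G : Type*} [Group G] {a b c d : G}
    (hc : ∀ x, Commute c x) (hd : Commute d a) : ⁅a * c, b * d⁆ = ⁅a, b⁆ := by
  simp [commutatorElement_mul_left_eq_conj_mul, commutatorElement_mul_right_eq_mul_conj,
    commutatorElement_eq_one_iff_commute.2 (hc _), commutatorElement_eq_one_iff_commute.2 hd.symm]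

theorem QuotientGroup.commute_mk_of_commutatorElement_mem {G : Type*} [Group G] {N : Subgroup G}
    [N.Normal] {a b : G} (h : ⁅a, b⁆ ∈ N) : Commute (a : G ⧸ N) b := by
  rw [← commutatorElement_eq_one_iff_commute]
  exact (eq_one_iff ⁅a, b⁆).2 h

namespace Subgroup

theorem commutator_commutator_le_of_rotate {G : Type*} [Group G] {H₁ H₂ H₃ N : Subgroup G}
    [N.Normal] (h1 : ⁅⁅H₂, H₃⁆, H₁⁆ ≤ N) (h2 : ⁅⁅H₃, H₁⁆, H₂⁆ ≤ N) : ⁅⁅H₁, H₂⁆, H₃⁆ ≤ N := by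
  simp only [← ker_mk' N, ← map_eq_bot_iff, map_commutator] at h1 h2 ⊢
  exact commutator_commutator_eq_bot_of_rotate h1 h2

section
variable {G : Type*} [Group G]
local notation "γ" => lowerCentralSeries (G := G) ⊤

theorem commutator_lowerCentralSeries_le (m n : ℕ) : ⁅γ m, γ n⁆ ≤ γ (m + n + 1) := by
  induction m generalizing n with
  | zero => rw [lowerCentralSeries_zero, commutator_comm, zero_add, lowerCentralSeries_succ]
  | succ m ih =>
    rw [lowerCentralSeries_succ]
    apply commutator_commutator_le_of_rotate
    · rw [commutator_comm ⊤, ← lowerCentralSeries_succ, commutator_comm]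
      convert ih (n + 1) using 2
      omega
    · calc ⁅⁅γ n, γ m⁆, ⊤⁆ ≤ ⁅γ (m + n + 1), ⊤⁆ :=
            commutator_mono (commutator_comm (γ m) _ ▸ ih n) le_rfl
        _ = γ (m + 1 + n + 1) := by rw [← lowerCentralSeries_succ]; congr 1; omega

theorem commute_of_mem_lowerCentralSeries {m n : ℕ} (hbot : γ (m + n + 1) = ⊥) {a b : G}
    (ha : a ∈ γ m) (hb : b ∈ γ n) : Commute a b := by
  rw [← commutatorElement_eq_one_iff_commute, ← mem_bot, ← hbot]
  exact commutator_lowerCentralSeries_le m n (commutator_mem_commutator ha hb)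

theorem map_lowerCentralSeries_le {H : Type*} [Group H] (f : G →* H) (n : ℕ) :
    (γ n).map f ≤ (⊤ : Subgroup H).lowerCentralSeries n := by
  rw [map_lowerCentralSeries]
  exact lowerCentralSeries_mono n le_top

theorem lowerCentralSeries_quotient_lowerCentralSeries (n : ℕ) :
    (⊤ : Subgroup (G ⧸ γ n)).lowerCentralSeries n = ⊥ := by
  rw [← map_top_of_surjective _ (mk'_surjective (γ n)), ← map_lowerCentralSeries,
    map_eq_bot_iff, ker_mk']

theorem inv_mul_apply_mem_lowerCentralSeries_add (φ : G →* G) {k : ℕ}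
    (hφ : ∀ g, g⁻¹ * φ g ∈ γ k) (j : ℕ) : ∀ w ∈ γ j, w⁻¹ * φ w ∈ γ (j + k) := by
  induction j with
  | zero => exact fun w _ ↦ (zero_add k).symm ▸ hφ w
  | succ j ih =>
    let N := γ (j + 1 + k)
    suffices γ (j + 1) ≤ (mk' N).eqLocus ((mk' N).comp φ) from
      fun w hw ↦ QuotientGroup.eq.1 (this hw)
    rw [lowerCentralSeries_succ, commutator_le]
    intro y hy g _
    -- modulo `N`, `y⁻¹ * φ y` is central and `g⁻¹ * φ g` commutes with `y`
    have hcentral : ∀ x : G ⧸ N, Commute (↑(y⁻¹ * φ y)) x := by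
      refine fun x ↦ QuotientGroup.induction_on x fun x ↦ commute_mk_of_commutatorElement_mem ?_
      have := commutator_mem_commutator (ih y hy) (mem_top x)
      rwa [← lowerCentralSeries_succ, add_right_comm] at this
    have hcomm : Commute (↑(g⁻¹ * φ g) : G ⧸ N) y := by
      refine commute_mk_of_commutatorElement_mem ?_
      have := commutator_lowerCentralSeries_le k j (commutator_mem_commutator (hφ g) hy)
      rwa [add_comm k j, add_right_comm] at this
    show ((⁅y, g⁆ : G) : G ⧸ N) = ((φ ⁅y, g⁆ : G) : G ⧸ N)
    rw [map_commutatorElement, ← mul_inv_cancel_left y (φ y), ← mul_inv_cancel_left g (φ g)]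
    exact (commutatorElement_mul_mul_of_commute (b := (g : G ⧸ N)) hcentral hcomm).symm

theorem apply_eq_self_of_mem_lowerCentralSeries (φ : G →* G) {k : ℕ} (hbot : γ (2 * k) = ⊥)
    (hφ : ∀ g, g⁻¹ * φ g ∈ γ k) {w : G} (hw : w ∈ γ k) : φ w = w := by
  have := inv_mul_apply_mem_lowerCentralSeries_add φ hφ k w hw
  rwa [← two_mul, hbot, mem_bot, inv_mul_eq_one, eq_comm] at this

theorem apply_apply_comm_of_inv_mul_apply_mem_lowerCentralSeries {φ ψ : G →* G} {k : ℕ}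
    (hbot : γ (2 * k) = ⊥) (hφ : ∀ g, g⁻¹ * φ g ∈ γ k) (hψ : ∀ g, g⁻¹ * ψ g ∈ γ k) (g : G) :
    φ (ψ g) = ψ (φ g) := by
  have hbot' : γ (k + k + 1) = ⊥ :=
    eq_bot_iff.2 (hbot ▸ lowerCentralSeries_antitone ⊤ (by omega))
  have hcomm := commute_of_mem_lowerCentralSeries hbot' (hφ g) (hψ g)
  calc φ (ψ g) = φ (g * (g⁻¹ * ψ g)) := by rw [mul_inv_cancel_left]
    _ = g * (g⁻¹ * φ g) * (g⁻¹ * ψ g) := by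
      rw [map_mul, apply_eq_self_of_mem_lowerCentralSeries φ hbot hφ (hψ g), mul_inv_cancel_left]
    _ = g * (g⁻¹ * ψ g) * (g⁻¹ * φ g) := by rw [mul_assoc, hcomm.eq, ← mul_assoc]
    _ = ψ (g * (g⁻¹ * φ g)) := by
      rw [map_mul, apply_eq_self_of_mem_lowerCentralSeries ψ hbot hψ (hφ g), mul_inv_cancel_left]
    _ = ψ (φ g) := by rw [mul_inv_cancel_left]

end
end Subgroup

theorem QuotientGroup.inv_mul_apply_mem_lowerCentralSeries {G : Type*} [Group G]
    {N : Subgroup G} [N.Normal] {k : ℕ} (χ : G ⧸ N → G ⧸ N)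
    (hχ : ∀ x : G, ∃ z ∈ (⊤ : Subgroup G).lowerCentralSeries k, χ x = ↑(x * z)) (q : G ⧸ N) :
    q⁻¹ * χ q ∈ (⊤ : Subgroup (G ⧸ N)).lowerCentralSeries k := by
  induction q using QuotientGroup.induction_on with | H x =>
  obtain ⟨z, hz, hχx⟩ := hχ x
  rw [hχx, QuotientGroup.mk_mul, inv_mul_cancel_left]
  exact Subgroup.map_lowerCentralSeries_le (mk' N) k ⟨z, hz, rfl⟩

theorem stmt0_general (G : Type*) [Group G] (k : ℕ)
    (φ ψ : (G ⧸ (⊤ : Subgroup G).lowerCentralSeries (2 * k)) ≃* (G ⧸ (⊤ : Subgroup G).lowerCentralSeries (2 * k)))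
    (hφ : ∀ x : G, ∃ z ∈ (⊤ : Subgroup G).lowerCentralSeries k,
      φ (QuotientGroup.mk x) = QuotientGroup.mk (x * z))
    (hψ : ∀ x : G, ∃ z ∈ (⊤ : Subgroup G).lowerCentralSeries k,
      ψ (QuotientGroup.mk x) = QuotientGroup.mk (x * z)) :
    ∀ q : G ⧸ (⊤ : Subgroup G).lowerCentralSeries (2 * k), φ (ψ q) = ψ (φ q) :=
  Subgroup.apply_apply_comm_of_inv_mul_apply_mem_lowerCentralSeries (φ := φ.toMonoidHom)
    (ψ := ψ.toMonoidHom) (Subgroup.lowerCentralSeries_quotient_lowerCentralSeries (2 * k))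
    (inv_mul_apply_mem_lowerCentralSeries φ hφ) (inv_mul_apply_mem_lowerCentralSeries ψ hψ)

/-- If `φ` and `ψ` are automorphisms of `G/Γ_{2k+1}G` that both induce
the identity on `G/Γ_{k+1}G`, then they commute.
Here `Γ_{j+1}G = lowerCentralSeries G j`. -/
theorem stmt0 (G : Type*) [Group G] (k : ℕ) (hk : 1 ≤ k)
    (φ ψ : (G ⧸ (⊤ : Subgroup G).lowerCentralSeries (2 * k)) ≃* (G ⧸ (⊤ : Subgroup G).lowerCentralSeries (2 * k)))
    (hφ : ∀ x : G, ∃ z ∈ (⊤ : Subgroup G).lowerCentralSeries k,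
      φ (QuotientGroup.mk x) = QuotientGroup.mk (x * z))
    (hψ : ∀ x : G, ∃ z ∈ (⊤ : Subgroup G).lowerCentralSeries k,
      ψ (QuotientGroup.mk x) = QuotientGroup.mk (x * z)) :
    ∀ q : G ⧸ (⊤ : Subgroup G).lowerCentralSeries (2 * k), φ (ψ q) = ψ (φ q) :=
  stmt0_general G k φ ψ hφ hψ
end

section
/- Let π be a group, A = Q[π] with augmentation ideal I, and k ≥ 1. For x ∈ π and u ∈ Γ_k π, one has u − x u x^{-1} ≡ [u,x] − 1 modulo I^{2k+1}, where [u,x] = uxu^{-1}x^{-1}. -/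
/-- The augmentation ideal of the rational group algebra `ℚ[π]`. -/
noncomputable def augIdeal (π : Type*) [Group π] : Ideal (MonoidAlgebra ℚ π) :=
  RingHom.ker ((MonoidAlgebra.lift ℚ ℚ π) 1)

open scoped commutatorElement

/-!
For a multiplicative map `f : G →* A` into a ring and a two-sided ideal `I`, the elements `g`
with `f g - 1 ∈ I ^ m` form a subgroup `D_m` (a dimension subgroup), and
`f ⁅p, q⁆ - 1 = ((f p - 1)(f q - 1) - (f q - 1)(f p - 1)) f (q p)⁻¹` gives `⁅D_i, D_j⁆ ⊆ D_{i+j}`;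
hence `Γ_k ⊆ D_k`. Writing `c = ⁅u, x⁆`, so that `x u x⁻¹ = c⁻¹ u`, one has
`u - c⁻¹ u - (c - 1) = (c⁻¹ - 1)(c - 1) u + (c - 1)(u - 1)`,
and for `u ∈ D_k`, `c ∈ D_{k+1}` both terms lie in `I ^ (2k+1)`.
-/

section DimensionSubgroup

variable {G A : Type*} [Group G] [Ring A] (f : G →* A) (I : Ideal A) [I.IsTwoSided]

theorem Ideal.mul_mem_pow_add {i j : ℕ} {a b : A} (ha : a ∈ I ^ i) (hb : b ∈ I ^ j) :
    a * b ∈ I ^ (i + j) :=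
  Ideal.IsTwoSided.pow_add (I := I) i j ▸ Submodule.mul_mem_mul ha hb

def dimensionSubgroup (m : ℕ) : Subgroup G where
  carrier := {g | f g - 1 ∈ I ^ m}
  one_mem' := by simp
  mul_mem' {a b} ha hb := by
    have h : f (a * b) - 1 = (f a - 1) * f b + (f b - 1) := by
      rw [map_mul]; noncomm_ring
    show f (a * b) - 1 ∈ I ^ m
    rw [h]
    exact add_mem (Ideal.mul_mem_right _ _ ha) hb
  inv_mem' {a} ha := by
    have h : f a⁻¹ - 1 = -(f a⁻¹ * (f a - 1)) := by
      rw [mul_sub, ← map_mul, inv_mul_cancel, map_one, mul_one, neg_sub]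
    show f a⁻¹ - 1 ∈ I ^ m
    rw [h]
    exact neg_mem (Ideal.mul_mem_left _ _ ha)

variable {f I}

theorem mem_dimensionSubgroup {m : ℕ} {g : G} :
    g ∈ dimensionSubgroup f I m ↔ f g - 1 ∈ I ^ m :=
  Iff.rfl

theorem dimensionSubgroup_zero : dimensionSubgroup f I 0 = ⊤ := by
  ext g
  simp [mem_dimensionSubgroup, Submodule.pow_zero, Ideal.one_eq_top]

theorem map_commutatorElement_sub_one (p q : G) :
    f ⁅p, q⁆ - 1 = ((f p - 1) * (f q - 1) - (f q - 1) * (f p - 1)) * f (q * p)⁻¹ := by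
  have h : (f p - 1) * (f q - 1) - (f q - 1) * (f p - 1) = f (p * q) - f (q * p) := by
    rw [map_mul, map_mul]; noncomm_ring
  rw [h, sub_mul, ← map_mul, ← map_mul, mul_inv_cancel, map_one, commutatorElement_def]
  congr 2
  group

theorem commutatorElement_mem_dimensionSubgroup {i j : ℕ} {p q : G}
    (hp : p ∈ dimensionSubgroup f I i) (hq : q ∈ dimensionSubgroup f I j) :
    ⁅p, q⁆ ∈ dimensionSubgroup f I (i + j) := by
  rw [mem_dimensionSubgroup] at *
  rw [map_commutatorElement_sub_one]
  refine Ideal.mul_mem_right _ _ (sub_mem (I.mul_mem_pow_add hp hq) ?_)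
  exact add_comm j i ▸ I.mul_mem_pow_add hq hp

theorem lowerCentralSeries_le_dimensionSubgroup {S : Subgroup G}
    (hS : S ≤ dimensionSubgroup f I 1) (n : ℕ) :
    S.lowerCentralSeries n ≤ dimensionSubgroup f I (n + 1) := by
  induction n with
  | zero => exact hS
  | succ n ih =>
    rw [Subgroup.lowerCentralSeries_succ, Subgroup.commutator_le]
    exact fun p hp q hq => commutatorElement_mem_dimensionSubgroup (ih hp) (hS hq)

theorem map_sub_map_conj_sub_map_commutatorElement_mem {k : ℕ} {u x : G}
    (hu : u ∈ dimensionSubgroup f I k) (hx : x ∈ dimensionSubgroup f I 1) :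
    f u - f (x * u * x⁻¹) - (f ⁅u, x⁆ - 1) ∈ I ^ (2 * k + 1) := by
  set c := ⁅u, x⁆ with hc_def
  have hc : c ∈ dimensionSubgroup f I (k + 1) := commutatorElement_mem_dimensionSubgroup hu hx
  have hconj : f (x * u * x⁻¹) = f c⁻¹ * f u := by
    rw [← map_mul, hc_def, commutatorElement_def]
    congr 1
    group
  have hcc : f c⁻¹ * f c = 1 := by rw [← map_mul, inv_mul_cancel, map_one]
  have key : f u - f (x * u * x⁻¹) - (f c - 1) =
      (f c⁻¹ - 1) * (f c - 1) * f u + (f c - 1) * (f u - 1) := by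
    rw [hconj]
    calc f u - f c⁻¹ * f u - (f c - 1)
        = (f c⁻¹ * f c - f c⁻¹) * f u - (f c - 1) := by rw [hcc]; noncomm_ring
      _ = _ := by noncomm_ring
  rw [key]
  refine add_mem (Ideal.mul_mem_right _ _ ?_) ?_
  · exact Ideal.pow_le_pow_right (by omega : 2 * k + 1 ≤ k + 1 + (k + 1))
      (I.mul_mem_pow_add (inv_mem hc) hc)
  · exact (by omega : k + 1 + k = 2 * k + 1) ▸ I.mul_mem_pow_add hc hu

end DimensionSubgroup

instance (π : Type*) [Group π] : (augIdeal π).IsTwoSided :=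
  inferInstanceAs (RingHom.ker _).IsTwoSided

theorem top_le_dimensionSubgroup_augIdeal (π : Type*) [Group π] :
    ⊤ ≤ dimensionSubgroup (MonoidAlgebra.of ℚ π) (augIdeal π) 1 := fun g _ => by
  rw [mem_dimensionSubgroup, Submodule.pow_one, augIdeal, RingHom.mem_ker]
  simp

theorem stmt5_general (π : Type*) [Group π] (k : ℕ) (x u : π)
    (hu : u ∈ (⊤ : Subgroup π).lowerCentralSeries (k - 1)) :
    (MonoidAlgebra.of ℚ π u - MonoidAlgebra.of ℚ π (x * u * x⁻¹))
      - (MonoidAlgebra.of ℚ π ⁅u, x⁆ - 1) ∈ (augIdeal π) ^ (2 * k + 1) := by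
  have hD := top_le_dimensionSubgroup_augIdeal π
  refine map_sub_map_conj_sub_map_commutatorElement_mem ?_ (hD trivial)
  rcases k with _ | k
  · simp [dimensionSubgroup_zero]
  · exact lowerCentralSeries_le_dimensionSubgroup hD k hu

/-- for `x ∈ π` and `u ∈ Γ_k π` (`k ≥ 1`),
`u − x u x⁻¹ ≡ [u,x] − 1 mod I^{2k+1}`, where `[u,x] = uxu⁻¹x⁻¹`.
Here `Γ_k π = lowerCentralSeries π (k-1)`. -/
theorem stmt5 (π : Type*) [Group π] (k : ℕ) (hk : 1 ≤ k) (x u : π)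
    (hu : u ∈ (⊤ : Subgroup π).lowerCentralSeries (k - 1)) :
    (MonoidAlgebra.of ℚ π u - MonoidAlgebra.of ℚ π (x * u * x⁻¹))
      - (MonoidAlgebra.of ℚ π ⁅u, x⁆ - 1) ∈ (augIdeal π) ^ (2 * k + 1) :=
  stmt5_general π k x u hu
end

section
/- Let π be a group, A = Q[π] with augmentation ideal I, and suppose κ̃ : π × π → A ⊗ A satisfies κ̃(α, x) = κ̃(α − 1, x − 1) lies in filtration degree k − 1 of A ⊗ A whenever α ∈ Γ_k π (i.e., κ̃(α,x) ∈ ∑_{p+q = k−1} I^p ⊗ I^q). Let γ ∈ Γ_k π (k ≥ 2), δ ∈ Γ_{k+2}π, γ_1 = γδ, and assume the product formula κ̃(αβ,x) = κ̃(α,x) + κ̃(β,x) ⋄ (α^{-1} ⊗ α). Then κ̃(γ_1, x) ⋄ (γ_1 − 1) ≡ κ̃(γ, x) ⋄ (γ − 1) modulo I^{2k+1}, where (a'⊗a'') ⋄ c := a' c a'' ∈ A for c ∈ A. -/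
/-!
By the product formula, `κ̃(γδ, x) ⋄ (γδ - 1) = κ̃(γ, x) ⋄ (γδ - 1) + κ̃(δ, x) ⋄ (δγ - 1)`, since
`γ⁻¹(γδ - 1)γ = δγ - 1`; so the difference is `κ̃(γ, x) ⋄ γ(δ - 1) + κ̃(δ, x) ⋄ (δγ - 1)`.
The lower central series lies in the dimension series, `Γ_j π ⊆ {g | g - 1 ∈ I^j}`, because
`[g, h] - 1 = ((g - 1)(h - 1) - (h - 1)(g - 1)) g⁻¹h⁻¹`. As `⋄` has filtered degree `0`, the two
terms lie in `I^{(k-1)+(k+2)}` and `I^{(k+1)+k}`.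
-/

open TensorProduct

/-- The `m`-th term `∑_{p+q=m} I^p ⊗ I^q` of the filtration of `A ⊗ A` induced by
the powers of the augmentation ideal `I` of `A = ℚ[π]`. -/
noncomputable def tensorFil (π : Type*) [Group π] (m : ℕ) :
    Submodule ℚ (MonoidAlgebra ℚ π ⊗[ℚ] MonoidAlgebra ℚ π) :=
  Submodule.span ℚ {z | ∃ p q : ℕ, p + q = m ∧
    ∃ a ∈ (augIdeal π) ^ p, ∃ b ∈ (augIdeal π) ^ q, z = a ⊗ₜ b}

theorem Ideal.mul_mem_pow_add_s18 {R : Type*} [Semiring R] {I : Ideal R} [I.IsTwoSided]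
    {p q : ℕ} {a b : R} (ha : a ∈ I ^ p) (hb : b ∈ I ^ q) : a * b ∈ I ^ (p + q) := by
  rw [Ideal.IsTwoSided.pow_add]
  exact Ideal.mul_mem_mul ha hb

theorem eval_mul_tmul {R A : Type*} [CommRing R] [Ring A] [Algebra R A]
    (m : A ⊗[R] A →ₗ[R] A ⊗[R] A →ₗ[R] A ⊗[R] A)
    (hm : ∀ a' a'' b' b'' : A, m (a' ⊗ₜ a'') (b' ⊗ₜ b'') = (a' * b') ⊗ₜ (b'' * a''))
    (e : A ⊗[R] A →ₗ[R] A →ₗ[R] A) (he : ∀ a' a'' c : A, e (a' ⊗ₜ a'') c = a' * c * a'')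
    (z : A ⊗[R] A) (u v c : A) :
    e (m z (u ⊗ₜ v)) c = e z (u * c * v) := by
  induction z using TensorProduct.induction_on with
  | zero => simp
  | tmul a b => simp only [hm, he, mul_assoc]
  | add z₁ z₂ h₁ h₂ => simp only [map_add, LinearMap.add_apply, h₁, h₂]

namespace MonoidAlgebra

variable {π : Type*} [Group π]

instance : (augIdeal π).IsTwoSided := inferInstanceAs (RingHom.ker _).IsTwoSided

theorem of_sub_one_mem_augIdeal (g : π) : of ℚ π g - 1 ∈ augIdeal π := by
  simp [augIdeal]

theorem of_inv_mul_of_mul_sub_one_mul_of (g h : π) :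
    of ℚ π g⁻¹ * (of ℚ π (g * h) - 1) * of ℚ π g = of ℚ π (h * g) - 1 := by
  simp only [mul_sub, sub_mul, mul_one, ← map_mul, inv_mul_cancel_left, inv_mul_cancel,
    map_one]

variable (π) in
noncomputable def dimensionSubgroup (n : ℕ) : Subgroup π where
  carrier := {g | of ℚ π g - 1 ∈ augIdeal π ^ n}
  one_mem' := by simp only [Set.mem_ofPred_eq, map_one, sub_self, zero_mem]
  mul_mem' {g h} hg hh := by
    have hsplit : of ℚ π (g * h) - 1 = of ℚ π g * (of ℚ π h - 1) + (of ℚ π g - 1) := by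
      rw [map_mul]; noncomm_ring
    rw [Set.mem_ofPred_eq, hsplit]
    exact add_mem (Ideal.mul_mem_left _ _ hh) hg
  inv_mem' {g} hg := by
    have hsplit : of ℚ π g⁻¹ - 1 = -(of ℚ π g⁻¹ * (of ℚ π g - 1)) := by
      rw [mul_sub, ← map_mul, inv_mul_cancel, map_one]; noncomm_ring
    rw [Set.mem_ofPred_eq, hsplit]
    exact neg_mem (Ideal.mul_mem_left _ _ hg)

theorem mem_dimensionSubgroup {n : ℕ} {g : π} :
    g ∈ dimensionSubgroup π n ↔ of ℚ π g - 1 ∈ augIdeal π ^ n :=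
  Iff.rfl

theorem dimensionSubgroup_one : dimensionSubgroup π 1 = ⊤ :=
  eq_top_iff.2 fun g _ ↦ by
    rw [mem_dimensionSubgroup, Submodule.pow_one]
    exact of_sub_one_mem_augIdeal g

open scoped commutatorElement in
theorem commutatorElement_mem_dimensionSubgroup {p q : ℕ} {g h : π}
    (hg : g ∈ dimensionSubgroup π p) (hh : h ∈ dimensionSubgroup π q) :
    ⁅g, h⁆ ∈ dimensionSubgroup π (p + q) := by
  rw [mem_dimensionSubgroup] at hg hh ⊢
  have hGH : of ℚ π g * of ℚ π h - of ℚ π h * of ℚ π g ∈ augIdeal π ^ (p + q) := by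
    have hsplit : of ℚ π g * of ℚ π h - of ℚ π h * of ℚ π g
        = (of ℚ π g - 1) * (of ℚ π h - 1) - (of ℚ π h - 1) * (of ℚ π g - 1) := by
      noncomm_ring
    rw [hsplit]
    exact sub_mem (Ideal.mul_mem_pow_add_s18 hg hh)
      (add_comm q p ▸ Ideal.mul_mem_pow_add_s18 hh hg)
  have hcomm : of ℚ π ⁅g, h⁆ - 1
      = (of ℚ π g * of ℚ π h - of ℚ π h * of ℚ π g) * of ℚ π g⁻¹ * of ℚ π h⁻¹ := by
    simp only [commutatorElement_def, sub_mul, ← map_mul, mul_inv_cancel_right, mul_inv_cancel,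
      map_one]
  rw [hcomm]
  exact Ideal.mul_mem_right _ _ (Ideal.mul_mem_right _ _ hGH)

theorem lowerCentralSeries_le_dimensionSubgroup (n : ℕ) :
    (⊤ : Subgroup π).lowerCentralSeries n ≤ dimensionSubgroup π (n + 1) := by
  induction n with
  | zero => simp [dimensionSubgroup_one]
  | succ n ih =>
    refine Subgroup.commutator_le.mpr fun g hg h _ ↦ ?_
    exact commutatorElement_mem_dimensionSubgroup (ih hg) (by simp [dimensionSubgroup_one])

theorem of_sub_one_mem_augIdeal_pow_succ {n : ℕ} {g : π}
    (hg : g ∈ (⊤ : Subgroup π).lowerCentralSeries n) : of ℚ π g - 1 ∈ augIdeal π ^ (n + 1) :=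
  lowerCentralSeries_le_dimensionSubgroup n hg

end MonoidAlgebra

open MonoidAlgebra

theorem eval_mem_augIdeal_pow_add {π : Type*} [Group π]
    (e : MonoidAlgebra ℚ π ⊗[ℚ] MonoidAlgebra ℚ π →ₗ[ℚ]
      MonoidAlgebra ℚ π →ₗ[ℚ] MonoidAlgebra ℚ π)
    (he : ∀ a' a'' c : MonoidAlgebra ℚ π, e (a' ⊗ₜ a'') c = a' * c * a'')
    {n p : ℕ} {z : MonoidAlgebra ℚ π ⊗[ℚ] MonoidAlgebra ℚ π} (hz : z ∈ tensorFil π n)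
    {c : MonoidAlgebra ℚ π} (hc : c ∈ augIdeal π ^ p) :
    e z c ∈ augIdeal π ^ (n + p) := by
  induction hz using Submodule.span_induction with
  | mem w hw =>
    obtain ⟨p', q', rfl, a, ha, b, hb, rfl⟩ := hw
    rw [he, show p' + q' + p = p' + p + q' by omega]
    exact Ideal.mul_mem_pow_add_s18 (Ideal.mul_mem_pow_add_s18 ha hc) hb
  | zero => simp
  | add u v _ _ hu hv => simpa only [map_add, LinearMap.add_apply] using add_mem hu hv
  | smul r w _ hw =>
    simpa only [map_smul, LinearMap.smul_apply] using Submodule.smul_of_tower_mem _ r hw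

theorem stmt18_general (π : Type*) [Group π]
    (m : (MonoidAlgebra ℚ π ⊗[ℚ] MonoidAlgebra ℚ π) →ₗ[ℚ]
      (MonoidAlgebra ℚ π ⊗[ℚ] MonoidAlgebra ℚ π) →ₗ[ℚ]
      (MonoidAlgebra ℚ π ⊗[ℚ] MonoidAlgebra ℚ π))
    (hm : ∀ a' a'' b' b'' : MonoidAlgebra ℚ π,
      m (a' ⊗ₜ a'') (b' ⊗ₜ b'') = (a' * b') ⊗ₜ (b'' * a''))
    (e : (MonoidAlgebra ℚ π ⊗[ℚ] MonoidAlgebra ℚ π) →ₗ[ℚ]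
      MonoidAlgebra ℚ π →ₗ[ℚ] MonoidAlgebra ℚ π)
    (he : ∀ a' a'' c : MonoidAlgebra ℚ π, e (a' ⊗ₜ a'') c = a' * c * a'')
    (kt : π → π → MonoidAlgebra ℚ π ⊗[ℚ] MonoidAlgebra ℚ π)
    (hprod : ∀ α β x : π, kt (α * β) x =
      kt α x + m (kt β x) (MonoidAlgebra.of ℚ π α⁻¹ ⊗ₜ MonoidAlgebra.of ℚ π α))
    (hfil : ∀ (n : ℕ) (α x : π), α ∈ (⊤ : Subgroup π).lowerCentralSeries n →
      kt α x ∈ tensorFil π n)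
    (k : ℕ) (γ δ : π)
    (hγ : γ ∈ (⊤ : Subgroup π).lowerCentralSeries (k - 1))
    (hδ : δ ∈ (⊤ : Subgroup π).lowerCentralSeries (k + 1))
    (x : π) :
    e (kt (γ * δ) x) (MonoidAlgebra.of ℚ π (γ * δ) - 1)
      - e (kt γ x) (MonoidAlgebra.of ℚ π γ - 1)
      ∈ (augIdeal π) ^ (2 * k + 1) := by
  have hsplit : e (kt (γ * δ) x) (of ℚ π (γ * δ) - 1) - e (kt γ x) (of ℚ π γ - 1)
      = e (kt γ x) (of ℚ π γ * (of ℚ π δ - 1)) + e (kt δ x) (of ℚ π (δ * γ) - 1) := by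
    rw [hprod, map_add, LinearMap.add_apply, eval_mul_tmul m hm e he,
      of_inv_mul_of_mul_sub_one_mul_of, ← sub_add_eq_add_sub, ← map_sub,
      sub_sub_sub_cancel_right, map_mul, mul_sub_one]
  have hδγ : δ * γ ∈ (⊤ : Subgroup π).lowerCentralSeries (k - 1) :=
    mul_mem (Subgroup.lowerCentralSeries_antitone ⊤ (by omega) hδ) hγ
  have hγterm := eval_mem_augIdeal_pow_add e he (hfil _ γ x hγ)
    (Ideal.mul_mem_left _ (of ℚ π γ) (of_sub_one_mem_augIdeal_pow_succ hδ))
  have hδterm := eval_mem_augIdeal_pow_add e he (hfil _ δ x hδ)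
    (of_sub_one_mem_augIdeal_pow_succ hδγ)
  rw [hsplit]
  exact add_mem (Ideal.pow_le_pow_right (by omega) hγterm)
    (Ideal.pow_le_pow_right (by omega) hδterm)

/-- suppose `κ̃ : π × π → A ⊗ A` satisfies the product formula
`κ̃(αβ,x) = κ̃(α,x) + κ̃(β,x) ⋄ (α⁻¹ ⊗ α)` and lies in filtration degree `m − 1`
of `A ⊗ A` whenever its first argument is in `Γ_m π` (here stated as: first
argument in `Γ_{m+1}π = lowerCentralSeries π m` gives filtration degree `m`).
Let `γ ∈ Γ_k π` (`k ≥ 2`), `δ ∈ Γ_{k+2}π` and `γ₁ = γδ`.  Then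
`κ̃(γ₁, x) ⋄ (γ₁ − 1) ≡ κ̃(γ, x) ⋄ (γ − 1) mod I^{2k+1}`, where
`(a'⊗a'') ⋄ c = a'ca''` is the evaluation map `e`. -/
theorem stmt18 (π : Type*) [Group π]
    (m : (MonoidAlgebra ℚ π ⊗[ℚ] MonoidAlgebra ℚ π) →ₗ[ℚ]
      (MonoidAlgebra ℚ π ⊗[ℚ] MonoidAlgebra ℚ π) →ₗ[ℚ]
      (MonoidAlgebra ℚ π ⊗[ℚ] MonoidAlgebra ℚ π))
    (hm : ∀ a' a'' b' b'' : MonoidAlgebra ℚ π,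
      m (a' ⊗ₜ a'') (b' ⊗ₜ b'') = (a' * b') ⊗ₜ (b'' * a''))
    (e : (MonoidAlgebra ℚ π ⊗[ℚ] MonoidAlgebra ℚ π) →ₗ[ℚ]
      MonoidAlgebra ℚ π →ₗ[ℚ] MonoidAlgebra ℚ π)
    (he : ∀ a' a'' c : MonoidAlgebra ℚ π, e (a' ⊗ₜ a'') c = a' * c * a'')
    (kt : π → π → MonoidAlgebra ℚ π ⊗[ℚ] MonoidAlgebra ℚ π)
    (hprod : ∀ α β x : π, kt (α * β) x =
      kt α x + m (kt β x) (MonoidAlgebra.of ℚ π α⁻¹ ⊗ₜ MonoidAlgebra.of ℚ π α))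
    (hfil : ∀ (n : ℕ) (α x : π), α ∈ (⊤ : Subgroup π).lowerCentralSeries n →
      kt α x ∈ tensorFil π n)
    (k : ℕ) (hk : 2 ≤ k) (γ δ : π)
    (hγ : γ ∈ (⊤ : Subgroup π).lowerCentralSeries (k - 1))
    (hδ : δ ∈ (⊤ : Subgroup π).lowerCentralSeries (k + 1))
    (x : π) :
    e (kt (γ * δ) x) (MonoidAlgebra.of ℚ π (γ * δ) - 1)
      - e (kt γ x) (MonoidAlgebra.of ℚ π γ - 1)
      ∈ (augIdeal π) ^ (2 * k + 1) :=
  stmt18_general π m hm e he kt hprod hfil k γ δ hγ hδ x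
end
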